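/- Let α ∈ (0,1], let Γ = ⌊4/α⌋ and δ = −2 + α + (α/2)(Γ+1). If a is a populated pre-multi-index with 𝔬(a) ≥ Γ + 1, then its scaling satisfies |a| ≥ δ + (2−α)·(𝔰(a^𝔟) + 𝔰(a^𝔠) + 𝔰(a^𝔢)) + (1−α)·(𝔰(a^𝔡) + 𝔰(a^𝔣)); in particular |a| > α. -/

import Mathlib

/-- The seven labels 𝔅 = {𝔟,𝔠,𝔡,𝔢,𝔣,𝔤,𝔥}. -/
inductive Lbl : Type
  | b | c | d | e | f | g | h
  deriving DecidableEq

instance : Fintype Lbl where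
  elems := {Lbl.b, Lbl.c, Lbl.d, Lbl.e, Lbl.f, Lbl.g, Lbl.h}
  complete := by intro x; cases x <;> simp

/-- Size 𝔰(q) = Σᵢ qᵢ of a finitely supported sequence. -/
def seqSize (q : ℕ →₀ ℕ) : ℕ := q.sum fun _ n => n

/-- Order 𝔬(q) = Σᵢ i·qᵢ of a finitely supported sequence. -/
def seqOrder (q : ℕ →₀ ℕ) : ℕ := q.sum fun i n => i * n

/-- Length 𝔩(q) = max of the support of q (0 if q = 0). -/
def seqLen (q : ℕ →₀ ℕ) : ℕ := q.support.sup id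

/-- A pre-multi-index: a family of seven finitely supported sequences. -/
abbrev PMI : Type := Lbl → (ℕ →₀ ℕ)

/-- Size of a pre-multi-index. -/
def pmiSize (a : PMI) : ℕ := ∑ k : Lbl, seqSize (a k)

/-- Order of a pre-multi-index. -/
def pmiOrder (a : PMI) : ℕ :=
  (∑ k : Lbl, seqOrder (a k)) + seqSize (a Lbl.d) + seqSize (a Lbl.f)
    + 2 * seqSize (a Lbl.g)

/-- Length of a pre-multi-index. -/
def pmiLen (a : PMI) : ℕ := Finset.univ.sup fun k : Lbl => seqLen (a k)

/-- A pre-multi-index is populated if 𝔰(a) = 𝔬(a) + 1. -/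
def Populated (a : PMI) : Prop := pmiSize a = pmiOrder a + 1

/-- The scaling |a| of a pre-multi-index, for a real parameter α. -/
noncomputable def scaling (α : ℝ) (a : PMI) : ℝ :=
  -(2 - α) * (pmiSize a : ℝ) + 2 * (pmiOrder a : ℝ)
    + (2 - α) * ((seqSize (a Lbl.b) : ℝ) + (seqSize (a Lbl.c) : ℝ) + (seqSize (a Lbl.e) : ℝ))
    + (1 - α) * ((seqSize (a Lbl.d) : ℝ) + (seqSize (a Lbl.f) : ℝ))
    - α * (seqSize (a Lbl.g) : ℝ)

/-- 1^𝔨_k : the pre-multi-index whose only nonzero entry is a single 1 in the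
𝔨-component at index k. -/
noncomputable def onePMI (k : Lbl) (n : ℕ) : PMI :=
  fun k' => if k' = k then Finsupp.single n 1 else 0

/-- A derivator (𝔨₀,𝔨₁,k₀,k₁). -/
def IsDerivator (l₀ l₁ : Lbl) (k₀ k₁ : ℕ) : Prop :=
  (l₀ = l₁ ∧ k₁ = k₀ + 1) ∨
    (((l₀ = Lbl.c ∧ l₁ = Lbl.d) ∨ (l₀ = Lbl.e ∧ l₁ = Lbl.f) ∨ (l₀ = Lbl.f ∧ l₁ = Lbl.g))
      ∧ k₁ = k₀)

/-
For a populated pre-multi-index the size is 𝔬(a) + 1, so the scaling collapses to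
|a| = −2 + α + α(𝔬(a) − 𝔰(a^𝔤)) + (2−α)(𝔰(a^𝔟)+𝔰(a^𝔠)+𝔰(a^𝔢)) + (1−α)(𝔰(a^𝔡)+𝔰(a^𝔣)).
Each 𝔤-entry contributes at least 2 to the order, so 𝔬(a) − 𝔰(a^𝔤) ≥ 𝔬(a)/2 ≥ (Γ+1)/2,
which gives the bound by δ. Finally δ > α because α(Γ+1) > 4 by the definition of Γ.
-/

lemma two_mul_seqSize_g_le_pmiOrder (a : PMI) : 2 * seqSize (a Lbl.g) ≤ pmiOrder a := by
  unfold pmiOrder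
  omega

lemma scaling_of_populated (α : ℝ) {a : PMI} (ha : Populated a) :
    scaling α a = -2 + α + α * ((pmiOrder a : ℝ) - seqSize (a Lbl.g))
      + (2 - α) * ((seqSize (a Lbl.b) : ℝ) + seqSize (a Lbl.c) + seqSize (a Lbl.e))
      + (1 - α) * ((seqSize (a Lbl.d) : ℝ) + seqSize (a Lbl.f)) := by
  have hsize : (pmiSize a : ℝ) = pmiOrder a + 1 := by exact_mod_cast ha
  rw [scaling, hsize]
  ring

lemma lt_mul_floor_div_add_one (x : ℝ) {α : ℝ} (hα : 0 < α) : x < α * (⌊x / α⌋₊ + 1) := by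
  rw [← div_lt_iff₀' hα]
  exact Nat.lt_floor_add_one _

theorem stmt5 (α : ℝ) (hα : α ∈ Set.Ioc (0:ℝ) 1) (a : PMI) (ha : Populated a)
    (hord : ⌊4 / α⌋₊ + 1 ≤ pmiOrder a) :
    ((-2 + α + (α / 2) * ((⌊4 / α⌋₊ : ℝ) + 1))
        + (2 - α) * ((seqSize (a Lbl.b) : ℝ) + (seqSize (a Lbl.c) : ℝ)
            + (seqSize (a Lbl.e) : ℝ))
        + (1 - α) * ((seqSize (a Lbl.d) : ℝ) + (seqSize (a Lbl.f) : ℝ))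
      ≤ scaling α a)
    ∧ α < scaling α a := by
  obtain ⟨hα0, hα1⟩ := hα
  have hordR : ((⌊4 / α⌋₊ : ℝ) + 1) ≤ pmiOrder a := by exact_mod_cast hord
  have hg : 2 * (seqSize (a Lbl.g) : ℝ) ≤ pmiOrder a := by
    exact_mod_cast two_mul_seqSize_g_le_pmiOrder a
  have hdiff : (α / 2) * ((⌊4 / α⌋₊ : ℝ) + 1) ≤ α * ((pmiOrder a : ℝ) - seqSize (a Lbl.g)) := by
    have := mul_le_mul_of_nonneg_left (hordR.trans (by linarith [hg] :
      (pmiOrder a : ℝ) ≤ 2 * ((pmiOrder a : ℝ) - seqSize (a Lbl.g)))) hα0.le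
    linarith
  have hδ : α < -2 + α + (α / 2) * ((⌊4 / α⌋₊ : ℝ) + 1) := by
    linarith [lt_mul_floor_div_add_one 4 hα0]
  have hB : 0 ≤ (2 - α) * ((seqSize (a Lbl.b) : ℝ) + seqSize (a Lbl.c) + seqSize (a Lbl.e)) :=
    mul_nonneg (by linarith) (by positivity)
  have hD : 0 ≤ (1 - α) * ((seqSize (a Lbl.d) : ℝ) + seqSize (a Lbl.f)) :=
    mul_nonneg (sub_nonneg.mpr hα1) (by positivity)
  constructor <;> linarith [scaling_of_populated α ha]
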